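/- If the evolute γ̃ is C¹-regular (i.e. admits a C¹ reparametrization with nowhere-vanishing derivative), then the signed radius of curvature R is strictly monotone on (a,b). -/

import Mathlib

/-! Along the curve the Frenet equations `γ' = T`, `ν' = -κ T` show that `γ + R(s₀) ν` has
derivative `κ (R - R(s₀)) T`, so although `R` is merely continuous, the evolute satisfies
`ev s - ev s₀ = (R s - R s₀) ν s` up to an error that is small compared with the oscillation of `R`
between `s₀` and `s`. Pulled back along a regular `C¹` parametrization `g = ev ∘ φ`, this first
bounds the oscillation of `R ∘ φ` near `t₀` by `O(t - t₀)`, and then shows that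
`t ↦ R (φ t) • ν (φ t₀)` has derivative `g' t₀ ≠ 0`. Hence `R ∘ φ` is differentiable with
nonvanishing derivative, so it is injective by Rolle's theorem; therefore `R` is injective on
`(a, b)`, and a continuous injective function on an interval is strictly monotone. -/

open Set Real Topology Filter
open scoped NNReal

noncomputable section

/-- The Euclidean plane. -/
abbrev Plane := EuclideanSpace ℝ (Fin 2)

/-- Rotation of a plane vector by `+π/2`. -/
def Jrot (v : Plane) : Plane := WithLp.toLp 2 ![-(v 1), v 0]

local notation "⟪" x ", " y "⟫" => @inner ℝ _ _ x y

/-- `f` is of class `C^{k,α}` on `s` : it is `C^k` there and (when `α ≠ 0`) its `k`-th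
derivative is `α`-Hölder continuous on `s`.  (`α = 0` means plain `C^k`.) -/
def IsCkAlphaOn (k : ℕ) (α : ℝ≥0) (f : ℝ → Plane) (s : Set ℝ) : Prop :=
  ContDiffOn ℝ k f s ∧ (α = 0 ∨ ∃ C : ℝ≥0, HolderOnWith C α (iteratedDeriv k f) s)

/-- The curve `f` restricted to `(u,v)` is `C^{k,α}`-regular: it admits a
reparametrization of class `C^{k,α}` whose derivative never vanishes. -/
def CkAlphaRegularOn (k : ℕ) (α : ℝ≥0) (f : ℝ → Plane) (u v : ℝ) : Prop :=
  ∃ c d : ℝ, c < d ∧ ∃ φ : ℝ → ℝ,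
    ContinuousOn φ (Set.Ioo c d) ∧ Set.BijOn φ (Set.Ioo c d) (Set.Ioo u v) ∧
    IsCkAlphaOn k α (f ∘ φ) (Set.Ioo c d) ∧
    ∀ t ∈ Set.Ioo c d, deriv (f ∘ φ) t ≠ 0

lemma Jrot_smul (r : ℝ) (v : Plane) : Jrot (r • v) = r • Jrot v := by
  ext i
  fin_cases i <;> simp [Jrot]

lemma Jrot_Jrot (v : Plane) : Jrot (Jrot v) = -v := by
  ext i
  fin_cases i <;> simp [Jrot]

lemma norm_Jrot (v : Plane) : ‖Jrot v‖ = ‖v‖ := by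
  simp [EuclideanSpace.norm_eq, Jrot, Fin.sum_univ_two, add_comm]

def JrotCLM : Plane →L[ℝ] Plane :=
  LinearMap.toContinuousLinearMap
    { toFun := Jrot
      map_add' := fun v w => by ext i; fin_cases i <;> simp [Jrot, add_comm]
      map_smul' := Jrot_smul }

lemma HasDerivAt.Jrot {f : ℝ → Plane} {f' : Plane} {x : ℝ} (h : HasDerivAt f f' x) :
    HasDerivAt (fun t => Jrot (f t)) (Jrot f') x :=
  JrotCLM.hasFDerivAt.comp_hasDerivAt x h

lemma eq_inner_Jrot_smul_Jrot {v w : Plane} (hv : ‖v‖ = 1) (hw : ⟪w, v⟫ = 0) :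
    w = ⟪w, Jrot v⟫ • Jrot v := by
  have hv' : v 0 ^ 2 + v 1 ^ 2 = 1 := by
    simpa [EuclideanSpace.norm_eq, Fin.sum_univ_two] using hv
  have hw' : w 0 * v 0 + w 1 * v 1 = 0 := by
    simpa [PiLp.inner_apply, Fin.sum_univ_two, mul_comm] using hw
  ext i
  fin_cases i <;> simp [Jrot, PiLp.inner_apply, Fin.sum_univ_two]
  · linear_combination (-(w 0)) * hv' + v 0 * hw'
  · linear_combination (-(w 1)) * hv' + v 1 * hw'

section

variable {E : Type*} [NormedAddCommGroup E] [InnerProductSpace ℝ E]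

lemma inner_eq_zero_of_hasDerivAt_of_norm_eq_one {T : ℝ → E} {T' : E} {s : ℝ}
    (hT : ∀ᶠ σ in 𝓝 s, ‖T σ‖ = 1) (h : HasDerivAt T T' s) : ⟪T', T s⟫ = 0 := by
  have hconst : HasDerivAt (‖T ·‖ ^ 2) 0 s :=
    (hasDerivAt_const s (1 : ℝ)).congr_of_eventuallyEq (hT.mono fun σ hσ => by simp [hσ])
  have := h.norm_sq.unique hconst
  rw [real_inner_comm]
  linarith

end

lemma hasDerivAt_normal_of_unit_speed {γ ν : ℝ → Plane} {κ : ℝ → ℝ} {U : Set ℝ}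
    (hU : IsOpen U) (hγ : ContDiffOn ℝ 2 γ U) (harc : ∀ s ∈ U, ‖deriv γ s‖ = 1)
    (hν : ∀ s, ν s = Jrot (deriv γ s)) (hκ : ∀ s, κ s = ⟪deriv (deriv γ) s, ν s⟫)
    {s : ℝ} (hs : s ∈ U) :
    HasDerivAt ν (-κ s • deriv γ s) s := by
  have hγ'' : HasDerivAt (deriv γ) (deriv (deriv γ) s) s :=
    (((hγ.deriv_of_isOpen hU (by norm_num)).differentiableOn one_ne_zero).differentiableAt
      (hU.mem_nhds hs)).hasDerivAt
  have hperp : ⟪deriv (deriv γ) s, deriv γ s⟫ = 0 :=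
    inner_eq_zero_of_hasDerivAt_of_norm_eq_one
      (Filter.eventually_of_mem (hU.mem_nhds hs) harc) hγ''
  have hcurv : deriv (deriv γ) s = κ s • ν s := by
    rw [hκ, hν]
    exact eq_inner_Jrot_smul_Jrot (harc s hs) hperp
  rw [show ν = fun σ => Jrot (deriv γ σ) from funext hν]
  convert hγ''.Jrot using 1
  rw [hcurv, Jrot_smul, hν, Jrot_Jrot, smul_neg, neg_smul]

lemma Filter.Eventually.forall_uIcc {p : ℝ → Prop} {x : ℝ} (h : ∀ᶠ y in 𝓝 x, p y) :
    ∀ᶠ y in 𝓝 x, ∀ z ∈ uIcc x y, p z := by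
  obtain ⟨ε, hε, hp⟩ := Metric.eventually_nhds_iff.1 h
  refine Metric.eventually_nhds_iff.2 ⟨ε, hε, fun y hy z hz => hp ?_⟩
  rw [Real.dist_eq] at hy ⊢
  exact (abs_sub_left_of_mem_uIcc hz).trans_lt hy

section

variable {E : Type*} [NormedAddCommGroup E] [NormedSpace ℝ E]

lemma norm_evolute_sub_sub_le {γ T ν : ℝ → E} {κ R : ℝ → ℝ} {s₀ s K W : ℝ}
    (hγ : ∀ σ ∈ uIcc s₀ s, HasDerivAt γ (T σ) σ)
    (hν : ∀ σ ∈ uIcc s₀ s, HasDerivAt ν (-κ σ • T σ) σ)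
    (hT : ∀ σ ∈ uIcc s₀ s, ‖T σ‖ = 1) (hRκ : ∀ σ ∈ uIcc s₀ s, R σ * κ σ = 1)
    (hκ : ∀ σ ∈ uIcc s₀ s, |κ σ| ≤ K) (hW : ∀ σ ∈ uIcc s₀ s, |R σ - R s₀| ≤ W) :
    ‖γ s + R s • ν s - (γ s₀ + R s₀ • ν s₀) - (R s - R s₀) • ν s‖ ≤ K * W * |s - s₀| := by
  have hderiv : ∀ σ ∈ uIcc s₀ s, HasDerivWithinAt (fun σ => γ σ + R s₀ • ν σ)
      ((κ σ * (R σ - R s₀)) • T σ) (uIcc s₀ s) σ := by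
    intro σ hσ
    refine (((hγ σ hσ).add ((hν σ hσ).const_smul (R s₀))).congr_deriv ?_).hasDerivWithinAt
    linear_combination (norm := module) -(hRκ σ hσ • T σ)
  have hbound : ∀ σ ∈ uIcc s₀ s, ‖(κ σ * (R σ - R s₀)) • T σ‖ ≤ K * W := by
    intro σ hσ
    rw [norm_smul, hT σ hσ, mul_one, norm_mul, Real.norm_eq_abs, Real.norm_eq_abs]
    exact mul_le_mul (hκ σ hσ) (hW σ hσ) (abs_nonneg _) ((abs_nonneg _).trans (hκ σ hσ))
  have := (convex_uIcc s₀ s).norm_image_sub_le_of_norm_hasDerivWithin_le hderiv hbound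
    left_mem_uIcc right_mem_uIcc
  rw [Real.norm_eq_abs] at this
  convert this using 2
  module

/-- The increment of `g` is `(r y - r x) • n y` up to `o` of the oscillation of `r` between `x`
and `y`. The evolute `γ + R • ν` has this property although `R` need not be differentiable. -/
def IncrementApproxAt (g : ℝ → E) (r : ℝ → ℝ) (n : ℝ → E) (x : ℝ) : Prop :=
  ∀ ε > 0, ∀ᶠ y in 𝓝 x, ∀ W, (∀ z ∈ uIcc x y, |r z - r x| ≤ W) →
    ‖g y - g x - (r y - r x) • n y‖ ≤ ε * W

lemma incrementApproxAt_evolute {γ T ν : ℝ → E} {κ R : ℝ → ℝ} {s₀ : ℝ}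
    (hframe : ∀ᶠ σ in 𝓝 s₀, HasDerivAt γ (T σ) σ ∧ HasDerivAt ν (-κ σ • T σ) σ ∧
      ‖T σ‖ = 1 ∧ R σ * κ σ = 1)
    (hκ : ContinuousAt κ s₀) :
    IncrementApproxAt (fun s => γ s + R s • ν s) R ν s₀ := by
  intro ε hε
  set K := |κ s₀| + 1
  have hκK : ∀ᶠ σ in 𝓝 s₀, |κ σ| < K := hκ.abs.eventually_lt continuousAt_const (lt_add_one _)
  have hsmall : ∀ᶠ s in 𝓝 s₀, K * |s - s₀| < ε :=
    (continuousAt_const.mul (continuous_id.sub continuous_const).abs.continuousAt).eventually_lt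
      continuousAt_const (by simpa using hε)
  filter_upwards [(hframe.and hκK).forall_uIcc, hsmall] with s hs hsε W hW
  have hW₀ : 0 ≤ W := (abs_nonneg _).trans (hW s₀ left_mem_uIcc)
  calc _ ≤ K * W * |s - s₀| :=
        norm_evolute_sub_sub_le (fun σ hσ => (hs σ hσ).1.1) (fun σ hσ => (hs σ hσ).1.2.1)
          (fun σ hσ => (hs σ hσ).1.2.2.1) (fun σ hσ => (hs σ hσ).1.2.2.2)
          (fun σ hσ => (hs σ hσ).2.le) hW
    _ = K * |s - s₀| * W := by ring
    _ ≤ ε * W := mul_le_mul_of_nonneg_right hsε.le hW₀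

lemma IncrementApproxAt.comp {g n : ℝ → E} {r φ : ℝ → ℝ} {t₀ : ℝ}
    (h : IncrementApproxAt g r n (φ t₀)) (hφ : ∀ᶠ t in 𝓝 t₀, ContinuousAt φ t) :
    IncrementApproxAt (g ∘ φ) (r ∘ φ) (n ∘ φ) t₀ := by
  intro ε hε
  filter_upwards [hφ.self_of_nhds.tendsto.eventually (h ε hε), hφ.forall_uIcc]
    with t ht hφt W hW
  refine ht W fun σ hσ => ?_
  obtain ⟨τ, hτ, rfl⟩ := intermediate_value_uIcc (continuousOn_of_forall_continuousAt hφt) hσ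
  exact hW τ hτ

lemma IncrementApproxAt.isBigO_sub {g n : ℝ → E} {r : ℝ → ℝ} {t₀ : ℝ} {G : E}
    (h : IncrementApproxAt g r n t₀) (hg : HasDerivAt g G t₀)
    (hn : ∀ᶠ t in 𝓝 t₀, ‖n t‖ = 1) (hr : ∀ᶠ t in 𝓝 t₀, ContinuousAt r t) :
    (fun t => r t - r t₀) =O[𝓝 t₀] (fun t => t - t₀) := by
  obtain ⟨M, hM₀, hM⟩ := hg.isBigO_sub.exists_pos
  refine Asymptotics.IsBigO.of_bound (2 * M) ?_
  filter_upwards [(hM.bound.and ((h (1 / 2) (by norm_num)).and (hn.and hr))).forall_uIcc]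
    with t ht
  -- the oscillation of `r` on `uIcc t₀ t` is attained at some `τ`, and the approximation
  -- with `ε = 1 / 2` bounds it there by `2 ‖g τ - g t₀‖`
  obtain ⟨τ, hτ, hmax⟩ := isCompact_uIcc.exists_isMaxOn nonempty_uIcc
    (continuousOn_of_forall_continuousAt fun σ hσ =>
      ((ht σ hσ).2.2.2.sub continuousAt_const).abs :
      ContinuousOn (fun σ => |r σ - r t₀|) (uIcc t₀ t))
  obtain ⟨hgτ, happrox, hnτ, -⟩ := ht τ hτ
  have hosc : |r τ - r t₀| ≤ ‖g τ - g t₀‖ + 1 / 2 * |r τ - r t₀| := calc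
    |r τ - r t₀| = ‖(r τ - r t₀) • n τ‖ := by rw [norm_smul, hnτ, mul_one, Real.norm_eq_abs]
    _ ≤ ‖g τ - g t₀‖ + ‖g τ - g t₀ - (r τ - r t₀) • n τ‖ := norm_le_norm_add_norm_sub _ _
    _ ≤ _ := by gcongr; exact happrox _ fun σ hσ => hmax (uIcc_subset_uIcc_left hτ hσ)
  simp only [Real.norm_eq_abs] at hgτ ⊢
  calc |r t - r t₀| ≤ |r τ - r t₀| := hmax right_mem_uIcc
    _ ≤ 2 * (M * |τ - t₀|) := by linarith
    _ ≤ 2 * (M * |t - t₀|) := by gcongr 2 * (M * ?_); exact abs_sub_left_of_mem_uIcc hτ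
    _ = 2 * M * |t - t₀| := by ring

lemma IncrementApproxAt.hasDerivAt_smul_const {g n : ℝ → E} {r : ℝ → ℝ} {t₀ : ℝ} {G : E}
    (h : IncrementApproxAt g r n t₀) (hg : HasDerivAt g G t₀)
    (hn : ∀ᶠ t in 𝓝 t₀, ‖n t‖ = 1) (hn₀ : ContinuousAt n t₀)
    (hr : ∀ᶠ t in 𝓝 t₀, ContinuousAt r t) :
    HasDerivAt (fun t => r t • n t₀) G t₀ := by
  have hρ := h.isBigO_sub hg hn hr
  obtain ⟨C, hC, hρC⟩ := hρ.exists_pos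
  have herr : (fun t => g t - g t₀ - (r t - r t₀) • n t) =o[𝓝 t₀] (fun t => t - t₀) := by
    refine Asymptotics.IsLittleO.of_bound fun ε hε => ?_
    filter_upwards [h (ε / C) (by positivity), hρC.bound.forall_uIcc] with t ht hρt
    refine (ht (C * |t - t₀|) fun τ hτ => ?_).trans_eq ?_
    · simpa only [Real.norm_eq_abs] using
        (hρt τ hτ).trans (by gcongr; exact abs_sub_left_of_mem_uIcc hτ)
    · rw [Real.norm_eq_abs]; field_simp
  have hturn : (fun t => (r t - r t₀) • (n t - n t₀)) =o[𝓝 t₀] (fun t => t - t₀) := by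
    simpa using hρ.smul_isLittleO
      (Asymptotics.isLittleO_one_iff ℝ |>.2 (tendsto_sub_nhds_zero_iff.2 hn₀))
  refine hasDerivAt_iff_isLittleO.2 (((hg.isLittleO.sub herr).sub hturn).congr_left ?_)
  intro t
  module

end

section

variable {E : Type*} [NormedAddCommGroup E] [InnerProductSpace ℝ E]

lemma HasDerivAt.of_smul_const {f : ℝ → ℝ} {v G : E} {x : ℝ} (hv : ‖v‖ = 1)
    (h : HasDerivAt (fun t => f t • v) G x) : HasDerivAt f ⟪G, v⟫ x ∧ G = ⟪G, v⟫ • v := by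
  have hf : HasDerivAt f ⟪G, v⟫ x := by
    simpa [real_inner_smul_left, real_inner_self_eq_norm_sq, hv] using
      h.inner ℝ (hasDerivAt_const x v)
  exact ⟨hf, h.unique (hf.smul_const v)⟩

lemma IncrementApproxAt.exists_hasDerivAt_ne_zero {g n : ℝ → E} {r : ℝ → ℝ} {t₀ : ℝ} {G : E}
    (h : IncrementApproxAt g r n t₀) (hg : HasDerivAt g G t₀) (hG : G ≠ 0)
    (hn : ∀ᶠ t in 𝓝 t₀, ‖n t‖ = 1) (hn₀ : ContinuousAt n t₀)
    (hr : ∀ᶠ t in 𝓝 t₀, ContinuousAt r t) :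
    ∃ c ≠ 0, HasDerivAt r c t₀ := by
  obtain ⟨hr', hGn⟩ := (h.hasDerivAt_smul_const hg hn hn₀ hr).of_smul_const hn.self_of_nhds
  exact ⟨_, fun h0 => hG (by rw [hGn, h0, zero_smul]), hr'⟩

end

lemma Set.OrdConnected.injOn_of_hasDerivAt_ne_zero {f : ℝ → ℝ} {s : Set ℝ} (hs : s.OrdConnected)
    (hf : ∀ x ∈ s, ∃ c ≠ 0, HasDerivAt f c x) : InjOn f s := by
  choose! f' hf'0 hf' using hf
  have hlt : ∀ x ∈ s, ∀ y ∈ s, x < y → f x ≠ f y := by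
    intro x hx y hy hxy hfxy
    have hsub : Icc x y ⊆ s := hs.out hx hy
    obtain ⟨z, hz, hz0⟩ := exists_hasDerivAt_eq_zero hxy
      (continuousOn_of_forall_continuousAt fun z hz => (hf' z (hsub hz)).continuousAt) hfxy
      fun z hz => hf' z (hsub (Ioo_subset_Icc_self hz))
    exact hf'0 z (hsub (Ioo_subset_Icc_self hz)) hz0
  intro x hx y hy hfxy
  by_contra hne
  rcases lt_or_gt_of_ne hne with hxy | hxy
  · exact hlt x hx y hy hxy hfxy
  · exact hlt y hy x hx hxy hfxy.symm

lemma continuousOn_curvature_of_unit_speed {γ ν : ℝ → Plane} {κ : ℝ → ℝ} {U : Set ℝ}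
    (hU : IsOpen U) (hγ : ContDiffOn ℝ 2 γ U) (harc : ∀ s ∈ U, ‖deriv γ s‖ = 1)
    (hν : ∀ s, ν s = Jrot (deriv γ s)) (hκ : ∀ s, κ s = ⟪deriv (deriv γ) s, ν s⟫) :
    ContinuousOn κ U := by
  have hγ'' : ContinuousOn (deriv (deriv γ)) U :=
    (hγ.deriv_of_isOpen hU (by norm_num)).continuousOn_deriv_of_isOpen hU le_rfl
  have hνc : ContinuousOn ν U := fun s hs =>
    (hasDerivAt_normal_of_unit_speed hU hγ harc hν hκ hs).continuousAt.continuousWithinAt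
  rw [show κ = fun s => ⟪deriv (deriv γ) s, ν s⟫ from funext hκ]
  exact hγ''.inner hνc

lemma incrementApproxAt_evolute_of_unit_speed {γ ν : ℝ → Plane} {κ R : ℝ → ℝ} {U : Set ℝ}
    (hU : IsOpen U) (hγ : ContDiffOn ℝ 2 γ U) (harc : ∀ s ∈ U, ‖deriv γ s‖ = 1)
    (hν : ∀ s, ν s = Jrot (deriv γ s)) (hκ : ∀ s, κ s = ⟪deriv (deriv γ) s, ν s⟫)
    (hRκ : ∀ s ∈ U, R s * κ s = 1) {s₀ : ℝ} (hs₀ : s₀ ∈ U) :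
    IncrementApproxAt (fun s => γ s + R s • ν s) R ν s₀ := by
  refine incrementApproxAt_evolute (Filter.eventually_of_mem (hU.mem_nhds hs₀) fun s hs =>
    ⟨((hγ.differentiableOn two_ne_zero).differentiableAt (hU.mem_nhds hs)).hasDerivAt,
      hasDerivAt_normal_of_unit_speed hU hγ harc hν hκ hs, harc s hs, hRκ s hs⟩)
    ((continuousOn_curvature_of_unit_speed hU hγ harc hν hκ).continuousAt (hU.mem_nhds hs₀))

/-- if the evolute is `C¹`-regular then `R` is strictly monotone. -/
theorem strictMono_radius_of_evolute_C1_regular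
    (a b : ℝ) (hab : a < b) (γ ν ev : ℝ → Plane) (κ R : ℝ → ℝ)
    (hγ : ContDiffOn ℝ 2 γ (Ioo a b))
    (harc : ∀ s ∈ Ioo a b, ‖deriv γ s‖ = 1)
    (hν : ∀ s, ν s = Jrot (deriv γ s))
    (hκdef : ∀ s, κ s = ⟪deriv (deriv γ) s, ν s⟫)
    (hκ : ∀ s ∈ Ioo a b, κ s ≠ 0)
    (hR : ∀ s, R s = (κ s)⁻¹)
    (hev : ∀ s, ev s = γ s + R s • ν s)
    (hreg : CkAlphaRegularOn 1 0 ev a b) :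
    StrictMonoOn R (Ioo a b) ∨ StrictAntiOn R (Ioo a b) := by
  obtain ⟨c, d, -, φ, hφ, hφbij, ⟨hg, -⟩, hg'⟩ := hreg
  have hκc := continuousOn_curvature_of_unit_speed isOpen_Ioo hγ harc hν hκdef
  have hRc : ContinuousOn R (Ioo a b) := by
    rw [show R = fun s => (κ s)⁻¹ from funext hR]
    exact hκc.inv₀ hκ
  have hRκ : ∀ s ∈ Ioo a b, R s * κ s = 1 := fun s hs => by
    rw [hR]; exact inv_mul_cancel₀ (hκ s hs)
  have hlocal : ∀ t₀ ∈ Ioo c d, ∃ c ≠ 0, HasDerivAt (R ∘ φ) c t₀ := by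
    intro t₀ ht₀
    have hnear : ∀ᶠ t in 𝓝 t₀, ContinuousAt φ t ∧ φ t ∈ Ioo a b :=
      Filter.eventually_of_mem (isOpen_Ioo.mem_nhds ht₀) fun t ht =>
        ⟨hφ.continuousAt (isOpen_Ioo.mem_nhds ht), hφbij.mapsTo ht⟩
    have happrox : IncrementApproxAt (ev ∘ φ) (R ∘ φ) (ν ∘ φ) t₀ := by
      rw [show ev = fun s => γ s + R s • ν s from funext hev]
      exact (incrementApproxAt_evolute_of_unit_speed isOpen_Ioo hγ harc hν hκdef hRκ
        (hφbij.mapsTo ht₀)).comp (hnear.mono fun t ht => ht.1)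
    refine happrox.exists_hasDerivAt_ne_zero
      ((hg.differentiableOn one_ne_zero).differentiableAt (isOpen_Ioo.mem_nhds ht₀)).hasDerivAt
      (hg' t₀ ht₀) (hnear.mono fun t ht => ?_) ?_ (hnear.mono fun t ht => ?_)
    · rw [Function.comp_apply, hν, norm_Jrot, harc _ ht.2]
    · exact (hasDerivAt_normal_of_unit_speed isOpen_Ioo hγ harc hν hκdef
        (hφbij.mapsTo ht₀)).continuousAt.comp hnear.self_of_nhds.1
    · exact (hRc.continuousAt (isOpen_Ioo.mem_nhds ht.2)).comp ht.1
  have hinj : InjOn R (Ioo a b) := by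
    simpa only [hφbij.image_eq] using
      (ordConnected_Ioo.injOn_of_hasDerivAt_ne_zero hlocal).image_of_comp
  exact hRc.strictMonoOn_of_injOn_Ioo hab hinj
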